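/- If L is quasi-commutative, then for every ideal I of the reticulation D we have I = (I_*)^*; consequently the maps p ↦ p^* and P ↦ P_* are mutually inverse order isomorphisms between the poset of prime elements of L and the poset of prime ideals of D. -/

import Mathlib

/-- The December 2024 Mathlib definition of a compact element of a complete lattice
(restored: the name is gone and its successor `IsCompactElement` uses another definition). -/
def CompleteLattice.IsCompactElement {α : Type*} [CompleteLattice α] (k : α) :=
  ∀ s : Set α, k ≤ sSup s → ∃ t : Finset α, ↑t ⊆ s ∧ k ≤ t.sup id

/-- `p` is a prime element with respect to the commutator `com`. -/
def ComPrime {L : Type*} [CompleteLattice L] (com : L → L → L) (p : L) : Prop :=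
  p ≠ ⊤ ∧ ∀ a b : L, com a b ≤ p → a ≤ p ∨ b ≤ p

/-- The radical of `a`: the infimum of all primes above `a`. -/
def comRho {L : Type*} [CompleteLattice L] (com : L → L → L) (a : L) : L :=
  sInf {p | ComPrime com p ∧ a ≤ p}

/-- `C`: the closure of the set of compact elements under binary joins and commutators. -/
inductive InC {L : Type*} [CompleteLattice L] (com : L → L → L) : L → Prop
  | base (a : L) : CompleteLattice.IsCompactElement a → InC com a
  | join {a b : L} : InC com a → InC com b → InC com (a ⊔ b)
  | comm {a b : L} : InC com a → InC com b → InC com (com a b)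

/-- `θ^* = {λ(a) : a compact, a ≤ θ}` as a subset of the reticulation. -/
def upStar {L : Type*} [CompleteLattice L] {D : Type*} (lam : L → D) (θ : L) : Set D :=
  {d | ∃ a : L, CompleteLattice.IsCompactElement a ∧ a ≤ θ ∧ lam a = d}

/-- `I_* = ⨆{a compact : λ(a) ∈ I}`. -/
def downStar {L : Type*} [CompleteLattice L] {D : Type*} (lam : L → D) (I : Set D) : L :=
  sSup {a : L | CompleteLattice.IsCompactElement a ∧ lam a ∈ I}

/-!
A compact element lies below a prime `p` as soon as some element with the same radical does, and
in a quasi-commutative lattice every element of `C` has a compact element with the same radical.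
So every element of the reticulation is `λ(c)` for a compact `c`, and for a prime `p` the
membership `λ(c) ∈ p^*` just says `c ≤ p`. From this, `p^*` is a prime ideal and `(p^*)_* = p`
(compact generation). Dually, a compact element lies below `I_*` exactly when its image lies
in `I`, because the compact elements with image in `I` form a directed family; this gives
`(I_*)^* = I`, and for a prime ideal `P` the primality of `P_*` follows by choosing compact
witnesses below the two factors of a commutator.
-/

namespace CompleteLattice.IsCompactElement

variable {α : Type*} [CompleteLattice α] {a b : α}

theorem bot : CompleteLattice.IsCompactElement (⊥ : α) :=
  fun _ _ => ⟨∅, by simp⟩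

theorem sup (ha : CompleteLattice.IsCompactElement a) (hb : CompleteLattice.IsCompactElement b) :
    CompleteLattice.IsCompactElement (a ⊔ b) := by
  classical
  intro s hs
  obtain ⟨t, hts, hat⟩ := ha s (le_sup_left.trans hs)
  obtain ⟨u, hus, hbu⟩ := hb s (le_sup_right.trans hs)
  refine ⟨t ∪ u, by simpa using Set.union_subset hts hus, ?_⟩
  rw [Finset.sup_union]
  exact sup_le_sup hat hbu

theorem exists_le_of_le_sSup_of_directedOn (ha : CompleteLattice.IsCompactElement a) {s : Set α}
    (hne : s.Nonempty) (hdir : DirectedOn (· ≤ ·) s) (h : a ≤ sSup s) : ∃ x ∈ s, a ≤ x :=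
  (isCompactElement_iff_le_of_directed_sSup_le α a).mp
    ((isCompactElement_iff_exists_le_sSup_of_le_sSup α a).mpr ha) s hne hdir h

end CompleteLattice.IsCompactElement

theorem le_of_forall_isCompactElement_le {α : Type*} [CompleteLattice α] {a b : α}
    (ha : a = sSup {k | CompleteLattice.IsCompactElement k ∧ k ≤ a})
    (h : ∀ k, CompleteLattice.IsCompactElement k → k ≤ a → k ≤ b) : a ≤ b := by
  rw [ha]
  exact sSup_le fun k hk => h k hk.1 hk.2

section Radical

variable {L : Type*} [CompleteLattice L] {com : L → L → L} {a a' b b' p : L}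

theorem le_comRho (com : L → L → L) (a : L) : a ≤ comRho com a :=
  le_sInf fun _ hp => hp.2

theorem comRho_le (hp : ComPrime com p) (ha : a ≤ p) : comRho com a ≤ p :=
  sInf_le ⟨hp, ha⟩

theorem comRho_le_comRho_iff :
    comRho com a ≤ comRho com b ↔ ∀ p, ComPrime com p → b ≤ p → a ≤ p :=
  ⟨fun h _ hp hb => (le_comRho com a).trans (h.trans (comRho_le hp hb)),
    fun h => le_sInf fun p ⟨hp, hb⟩ => comRho_le hp (h p hp hb)⟩

theorem comRho_eq_comRho_iff :
    comRho com a = comRho com b ↔ ∀ p, ComPrime com p → (a ≤ p ↔ b ≤ p) := by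
  rw [le_antisymm_iff, comRho_le_comRho_iff, comRho_le_comRho_iff]
  exact ⟨fun h p hp => ⟨h.2 p hp, h.1 p hp⟩,
    fun h => ⟨fun p hp => (h p hp).2, fun p hp => (h p hp).1⟩⟩

theorem ComPrime.com_le_iff (hle : ∀ a b : L, com a b ≤ a ⊓ b) (hp : ComPrime com p) :
    com a b ≤ p ↔ a ≤ p ∨ b ≤ p :=
  ⟨hp.2 a b, fun h => h.elim (fun ha => (hle a b).trans (inf_le_of_left_le ha))
    (fun hb => (hle a b).trans (inf_le_of_right_le hb))⟩

theorem comRho_sup_congr (ha : comRho com a = comRho com a') (hb : comRho com b = comRho com b') :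
    comRho com (a ⊔ b) = comRho com (a' ⊔ b') := by
  rw [comRho_eq_comRho_iff] at *
  intro p hp
  simp only [sup_le_iff, ha p hp, hb p hp]

theorem comRho_com_congr (hle : ∀ a b : L, com a b ≤ a ⊓ b)
    (ha : comRho com a = comRho com a') (hb : comRho com b = comRho com b') :
    comRho com (com a b) = comRho com (com a' b') := by
  rw [comRho_eq_comRho_iff] at *
  intro p hp
  rw [hp.com_le_iff hle, hp.com_le_iff hle, ha p hp, hb p hp]

end Radical

def QuasiCommutative {L : Type*} [CompleteLattice L] (com : L → L → L) : Prop :=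
  ∀ a b : L, CompleteLattice.IsCompactElement a → CompleteLattice.IsCompactElement b →
    ∃ c : L, CompleteLattice.IsCompactElement c ∧ c ≤ com a b ∧
      comRho com c = comRho com (com a b)

theorem InC.exists_isCompactElement_comRho_eq {L : Type*} [CompleteLattice L]
    {com : L → L → L} (hle : ∀ a b : L, com a b ≤ a ⊓ b) (hqc : QuasiCommutative com) {a : L}
    (ha : InC com a) : ∃ c, CompleteLattice.IsCompactElement c ∧ comRho com c = comRho com a := by
  induction ha with
  | base a ha => exact ⟨a, ha, rfl⟩
  | join _ _ iha ihb =>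
    obtain ⟨c, hc, hca⟩ := iha
    obtain ⟨d, hd, hdb⟩ := ihb
    exact ⟨c ⊔ d, hc.sup hd, comRho_sup_congr hca hdb⟩
  | comm _ _ iha ihb =>
    obtain ⟨c, hc, hca⟩ := iha
    obtain ⟨d, hd, hdb⟩ := ihb
    obtain ⟨e, he, -, hecd⟩ := hqc c d hc hd
    exact ⟨e, he, hecd.trans (comRho_com_congr hle hca hdb)⟩

/-- The reticulation map `λ : C → C/≡ = D`, given as a function on all of `L` whose values off
`C` play no role. -/
structure IsReticulationMap {L D : Type*} [CompleteLattice L] [Lattice D] [BoundedOrder D]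
    (com : L → L → L) (lam : L → D) : Prop where
  le_iff : ∀ {a b : L}, InC com a → InC com b → (lam a ≤ lam b ↔ comRho com a ≤ comRho com b)
  map_sup : ∀ {a b : L}, InC com a → InC com b → lam (a ⊔ b) = lam a ⊔ lam b
  map_com : ∀ {a b : L}, InC com a → InC com b → lam (com a b) = lam a ⊓ lam b
  map_bot : lam ⊥ = ⊥
  eq_top_iff : ∀ {a : L}, InC com a → (lam a = ⊤ ↔ a = ⊤)
  exists_eq : ∀ d : D, ∃ a : L, InC com a ∧ lam a = d

namespace IsReticulationMap

variable {L D : Type*} [CompleteLattice L] [Lattice D] [BoundedOrder D]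
  {com : L → L → L} {lam : L → D} {a b p : L}

theorem eq_of_comRho_eq (hret : IsReticulationMap com lam) (ha : InC com a) (hb : InC com b)
    (h : comRho com a = comRho com b) : lam a = lam b :=
  le_antisymm ((hret.le_iff ha hb).mpr h.le) ((hret.le_iff hb ha).mpr h.ge)

theorem le_of_lam_le (hret : IsReticulationMap com lam) (hp : ComPrime com p) (ha : InC com a)
    (hb : InC com b) (h : lam a ≤ lam b) (hbp : b ≤ p) : a ≤ p :=
  comRho_le_comRho_iff.mp ((hret.le_iff ha hb).mp h) p hp hbp

theorem exists_isCompactElement_eq (hret : IsReticulationMap com lam)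
    (hle : ∀ a b : L, com a b ≤ a ⊓ b) (hqc : QuasiCommutative com) (d : D) :
    ∃ c, CompleteLattice.IsCompactElement c ∧ lam c = d := by
  obtain ⟨a, ha, rfl⟩ := hret.exists_eq d
  obtain ⟨c, hc, hca⟩ := ha.exists_isCompactElement_comRho_eq hle hqc
  exact ⟨c, hc, hret.eq_of_comRho_eq (.base c hc) ha hca⟩

theorem lam_mem_upStar_iff (hret : IsReticulationMap com lam) (hle : ∀ a b : L, com a b ≤ a ⊓ b)
    (hqc : QuasiCommutative com) (hp : ComPrime com p) (ha : InC com a) :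
    lam a ∈ upStar lam p ↔ a ≤ p := by
  constructor
  · rintro ⟨b, hb, hbp, hba⟩
    exact hret.le_of_lam_le hp ha (.base b hb) hba.ge hbp
  · intro hap
    obtain ⟨c, hc, hca⟩ := hret.exists_isCompactElement_eq hle hqc (lam a)
    exact ⟨c, hc, hret.le_of_lam_le hp (.base c hc) ha hca.le hap, hca⟩

theorem downStar_upStar (hret : IsReticulationMap com lam)
    (hcg : p = sSup {k | CompleteLattice.IsCompactElement k ∧ k ≤ p}) (hp : ComPrime com p) :
    downStar lam (upStar lam p) = p := by
  refine le_antisymm (sSup_le ?_) (le_of_forall_isCompactElement_le hcg fun k hk hkp => ?_)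
  · rintro a ⟨ha, b, hb, hbp, hba⟩
    exact hret.le_of_lam_le hp (.base a ha) (.base b hb) hba.ge hbp
  · exact le_sSup ⟨hk, k, hk, hkp, rfl⟩

theorem upStar_subset_upStar_iff (hret : IsReticulationMap com lam)
    (hcg : ∀ a : L, a = sSup {k | CompleteLattice.IsCompactElement k ∧ k ≤ a}) {q : L}
    (hp : ComPrime com p) (hq : ComPrime com q) : upStar lam p ⊆ upStar lam q ↔ p ≤ q := by
  refine ⟨fun h => ?_, fun hpq _ ⟨a, ha, hap, hda⟩ => ⟨a, ha, hap.trans hpq, hda⟩⟩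
  rw [← hret.downStar_upStar (hcg p) hp, ← hret.downStar_upStar (hcg q) hq]
  exact sSup_le_sSup fun a ⟨ha, hap⟩ => ⟨ha, h hap⟩

theorem isIdeal_upStar (hret : IsReticulationMap com lam) (hle : ∀ a b : L, com a b ≤ a ⊓ b)
    (hqc : QuasiCommutative com) (hp : ComPrime com p) : Order.IsIdeal (upStar lam p) where
  IsLowerSet := by
    rintro _ d hd ⟨a, ha, hap, rfl⟩
    obtain ⟨c, hc, rfl⟩ := hret.exists_isCompactElement_eq hle hqc d
    exact (hret.lam_mem_upStar_iff hle hqc hp (.base c hc)).mpr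
      (hret.le_of_lam_le hp (.base c hc) (.base a ha) hd hap)
  Nonempty := ⟨⊥, ⊥, .bot, bot_le, hret.map_bot⟩
  Directed := by
    rintro _ ⟨a, ha, hap, rfl⟩ _ ⟨b, hb, hbp, rfl⟩
    refine ⟨lam a ⊔ lam b, ⟨a ⊔ b, ha.sup hb, sup_le hap hbp, ?_⟩, le_sup_left, le_sup_right⟩
    exact hret.map_sup (.base a ha) (.base b hb)

theorem exists_isPrime_coe_eq_upStar (hret : IsReticulationMap com lam)
    (hle : ∀ a b : L, com a b ≤ a ⊓ b) (hqc : QuasiCommutative com) (hp : ComPrime com p) :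
    ∃ I : Order.Ideal D, I.IsPrime ∧ (I : Set D) = upStar lam p := by
  set I := (hret.isIdeal_upStar hle hqc hp).toIdeal
  have hI : (I : Set D) = upStar lam p := Order.Ideal.coe_toIdeal _
  have : I.IsProper := Order.Ideal.isProper_of_notMem (p := ⊤) fun ⟨a, ha, hap, hatop⟩ =>
    hp.1 (top_le_iff.mp ((hret.eq_top_iff (.base a ha)).mp hatop ▸ hap))
  refine ⟨I, Order.Ideal.IsPrime.of_mem_or_mem fun {x y} (hxy : x ⊓ y ∈ I) => ?_, hI⟩
  obtain ⟨a, ha, rfl⟩ := hret.exists_eq x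
  obtain ⟨b, hb, rfl⟩ := hret.exists_eq y
  rw [← SetLike.mem_coe, hI, ← hret.map_com ha hb,
    hret.lam_mem_upStar_iff hle hqc hp (.comm ha hb), hp.com_le_iff hle] at hxy
  simpa only [← SetLike.mem_coe, hI, hret.lam_mem_upStar_iff hle hqc hp ha,
    hret.lam_mem_upStar_iff hle hqc hp hb] using hxy

theorem lam_mem_of_le_downStar (hret : IsReticulationMap com lam) (I : Order.Ideal D) {k : L}
    (hk : CompleteLattice.IsCompactElement k) (h : k ≤ downStar lam (I : Set D)) : lam k ∈ I := by
  have hne : {a | CompleteLattice.IsCompactElement a ∧ lam a ∈ I}.Nonempty := by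
    refine ⟨⊥, .bot, ?_⟩
    rw [hret.map_bot]
    exact I.bot_mem
  have hdir : DirectedOn (· ≤ ·) {a | CompleteLattice.IsCompactElement a ∧ lam a ∈ I} := by
    rintro a ⟨ha, haI⟩ b ⟨hb, hbI⟩
    refine ⟨a ⊔ b, ⟨ha.sup hb, ?_⟩, le_sup_left, le_sup_right⟩
    rw [hret.map_sup (.base a ha) (.base b hb)]
    exact I.sup_mem haI hbI
  obtain ⟨a, ⟨ha, haI⟩, hka⟩ := hk.exists_le_of_le_sSup_of_directedOn hne hdir h
  exact I.lower ((hret.le_iff (.base k hk) (.base a ha)).mpr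
    (comRho_le_comRho_iff.mpr fun _ _ hap => hka.trans hap)) haI

theorem le_downStar_iff (hret : IsReticulationMap com lam)
    (hcg : a = sSup {k | CompleteLattice.IsCompactElement k ∧ k ≤ a}) (I : Order.Ideal D) :
    a ≤ downStar lam (I : Set D) ↔ ∀ k, CompleteLattice.IsCompactElement k → k ≤ a → lam k ∈ I :=
  ⟨fun h _ hk hka => hret.lam_mem_of_le_downStar I hk (hka.trans h),
    fun h => le_of_forall_isCompactElement_le hcg fun k hk hka => le_sSup ⟨hk, h k hk hka⟩⟩

theorem upStar_downStar (hret : IsReticulationMap com lam) (hle : ∀ a b : L, com a b ≤ a ⊓ b)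
    (hqc : QuasiCommutative com) (I : Order.Ideal D) :
    upStar lam (downStar lam (I : Set D)) = I := by
  ext d
  refine ⟨fun ⟨a, ha, haI, hda⟩ => hda ▸ hret.lam_mem_of_le_downStar I ha haI, fun hd => ?_⟩
  obtain ⟨c, hc, rfl⟩ := hret.exists_isCompactElement_eq hle hqc d
  exact ⟨c, hc, le_sSup ⟨hc, hd⟩, rfl⟩

theorem comPrime_downStar (hret : IsReticulationMap com lam)
    (hcomm : ∀ a b : L, com a b = com b a) (hmono : ∀ a b c : L, a ≤ b → com a c ≤ com b c)
    (hcg : ∀ a : L, a = sSup {k | CompleteLattice.IsCompactElement k ∧ k ≤ a})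
    (htopc : CompleteLattice.IsCompactElement (⊤ : L)) (hqc : QuasiCommutative com)
    {P : Order.Ideal D} (hP : P.IsPrime) : ComPrime com (downStar lam (P : Set D)) := by
  refine ⟨fun htop => hP.top_notMem ?_, fun a b hab => ?_⟩
  · simpa only [(hret.eq_top_iff (.base ⊤ htopc)).mpr rfl] using
      hret.lam_mem_of_le_downStar P htopc htop.ge
  by_contra! hnot
  simp only [hret.le_downStar_iff (hcg _), not_forall, exists_prop] at hab hnot
  obtain ⟨⟨x, hx, hxa, hxP⟩, ⟨y, hy, hyb, hyP⟩⟩ := hnot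
  obtain ⟨c, hc, hcxy, hcr⟩ := hqc x y hx hy
  have hxyab : com x y ≤ com a b := calc
    com x y ≤ com a y := hmono x a y hxa
    _ = com y a := hcomm a y
    _ ≤ com b a := hmono y b a hyb
    _ = com a b := hcomm b a
  have hcP : lam c ∈ P := hab c hc (hcxy.trans hxyab)
  rw [hret.eq_of_comRho_eq (.base c hc) (.comm (.base x hx) (.base y hy)) hcr,
    hret.map_com (.base x hx) (.base y hy)] at hcP
  exact (hP.mem_or_mem hcP).elim hxP hyP

end IsReticulationMap

theorem quasiCommutative_reticulation_spectra_iso_general {L : Type*} [CompleteLattice L]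
    (com : L → L → L)
    (hcomm : ∀ a b : L, com a b = com b a)
    (hmono : ∀ a b c : L, a ≤ b → com a c ≤ com b c)
    (hle : ∀ a b : L, com a b ≤ a ⊓ b)
    (hcg : ∀ a : L, a = sSup {k | CompleteLattice.IsCompactElement k ∧ k ≤ a})
    (htopc : CompleteLattice.IsCompactElement (⊤ : L))
    {D : Type*} [DistribLattice D] [BoundedOrder D] (lam : L → D)
    (hlamle : ∀ a b : L, InC com a → InC com b →
      (lam a ≤ lam b ↔ comRho com a ≤ comRho com b))
    (hlamsup : ∀ a b : L, InC com a → InC com b → lam (a ⊔ b) = lam a ⊔ lam b)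
    (hlaminf : ∀ a b : L, InC com a → InC com b → lam (com a b) = lam a ⊓ lam b)
    (hlambot : lam ⊥ = ⊥) (hlamtop : ∀ a : L, InC com a → (lam a = ⊤ ↔ a = ⊤))
    (hlamsurj : ∀ d : D, ∃ a : L, InC com a ∧ lam a = d)
    (hqc : ∀ a b : L, CompleteLattice.IsCompactElement a → CompleteLattice.IsCompactElement b →
      ∃ c : L, CompleteLattice.IsCompactElement c ∧ c ≤ com a b ∧
        comRho com c = comRho com (com a b)) :
    (∀ I : Order.Ideal D, upStar lam (downStar lam (I : Set D)) = (I : Set D)) ∧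
    (∀ p : L, ComPrime com p → downStar lam (upStar lam p) = p) ∧
    (∀ p : L, ComPrime com p → ∃ I : Order.Ideal D, I.IsPrime ∧ (I : Set D) = upStar lam p) ∧
    (∀ P : Order.Ideal D, P.IsPrime → ComPrime com (downStar lam (P : Set D))) ∧
    (∀ P : Order.Ideal D, P.IsPrime → upStar lam (downStar lam (P : Set D)) = (P : Set D)) ∧
    (∀ p q : L, ComPrime com p → ComPrime com q → (p ≤ q ↔ upStar lam p ⊆ upStar lam q)) := by
  have hret : IsReticulationMap com lam :=
    ⟨hlamle _ _, hlamsup _ _, hlaminf _ _, hlambot, hlamtop _, hlamsurj⟩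
  have hupdown := hret.upStar_downStar hle hqc
  exact ⟨hupdown, fun p => hret.downStar_upStar (hcg p),
    fun p => hret.exists_isPrime_coe_eq_upStar hle hqc,
    fun P => hret.comPrime_downStar hcomm hmono hcg htopc hqc, fun P _ => hupdown P,
    fun p q hp hq => (hret.upStar_subset_upStar_iff hcg hp hq).symm⟩

theorem quasiCommutative_reticulation_spectra_iso {L : Type*} [CompleteLattice L]
    (com : L → L → L)
    (hcomm : ∀ a b : L, com a b = com b a)
    (hmono : ∀ a b c : L, a ≤ b → com a c ≤ com b c)
    (hle : ∀ a b : L, com a b ≤ a ⊓ b)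
    (hdist : ∀ (s : Set L) (b : L), com (sSup s) b = ⨆ x ∈ s, com x b)
    (htop : ∀ a : L, com ⊤ a = a)
    (hex : ∀ a : L, a ≠ ⊤ → ∃ p, ComPrime com p ∧ a ≤ p)
    (hcg : ∀ a : L, a = sSup {k | CompleteLattice.IsCompactElement k ∧ k ≤ a})
    (htopc : CompleteLattice.IsCompactElement (⊤ : L))
    {D : Type*} [DistribLattice D] [BoundedOrder D] (lam : L → D)
    (hlamle : ∀ a b : L, InC com a → InC com b →
      (lam a ≤ lam b ↔ comRho com a ≤ comRho com b))
    (hlamsup : ∀ a b : L, InC com a → InC com b → lam (a ⊔ b) = lam a ⊔ lam b)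
    (hlaminf : ∀ a b : L, InC com a → InC com b → lam (com a b) = lam a ⊓ lam b)
    (hlambot : lam ⊥ = ⊥) (hlamtop : ∀ a : L, InC com a → (lam a = ⊤ ↔ a = ⊤))
    (hlamsurj : ∀ d : D, ∃ a : L, InC com a ∧ lam a = d)
    (hqc : ∀ a b : L, CompleteLattice.IsCompactElement a → CompleteLattice.IsCompactElement b →
      ∃ c : L, CompleteLattice.IsCompactElement c ∧ c ≤ com a b ∧
        comRho com c = comRho com (com a b)) :
    (∀ I : Order.Ideal D, upStar lam (downStar lam (I : Set D)) = (I : Set D)) ∧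
    (∀ p : L, ComPrime com p → downStar lam (upStar lam p) = p) ∧
    (∀ p : L, ComPrime com p → ∃ I : Order.Ideal D, I.IsPrime ∧ (I : Set D) = upStar lam p) ∧
    (∀ P : Order.Ideal D, P.IsPrime → ComPrime com (downStar lam (P : Set D))) ∧
    (∀ P : Order.Ideal D, P.IsPrime → upStar lam (downStar lam (P : Set D)) = (P : Set D)) ∧
    (∀ p q : L, ComPrime com p → ComPrime com q → (p ≤ q ↔ upStar lam p ⊆ upStar lam q)) :=
  quasiCommutative_reticulation_spectra_iso_general com hcomm hmono hle hcg htopc lam hlamle hlamsup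
    hlaminf hlambot hlamtop hlamsurj hqc
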